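/- Fix n ≥ 2 and complex numbers q_{ij} (1 ≤ i, j ≤ n) with q_{ii} = 1, q_{ji} = q_{ij}^{-1} and |q_{ij}| = 1, and let S = (S_1, …, S_n) be the tuple on the q-commuting Fock space Γ_q(ℂⁿ), S_i = P_{Γ_q(ℂⁿ)} V_i |_{Γ_q(ℂⁿ)}, with vacuum vector ω. Set G_i = S_i + S_i^*. Then ⟨ω, G_2 G_2 G_1 G_1 ω⟩ = 1 while ⟨ω, G_2 G_1 G_1 G_2 ω⟩ = 1/2; in particular the vacuum expectation X ↦ ⟨ω, X ω⟩ is not a tracial state on the von Neumann algebra generated by G_1, …, G_n. -/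

import Mathlib

open scoped BigOperators

/-- `q^σ(x) = ∏ q_{x_{σ⁻¹(k)} x_{σ⁻¹(i)}}`, the product over all pairs `i < k`
with `σ⁻¹(i) > σ⁻¹(k)`. -/
noncomputable def qSigma {n : ℕ} (q : Fin n → Fin n → ℂ) {m : ℕ} (x : Fin m → Fin n)
    (σ : Equiv.Perm (Fin m)) : ℂ :=
  ∏ p ∈ Finset.univ.filter (fun p : Fin m × Fin m => p.1 < p.2 ∧ σ⁻¹ p.2 < σ⁻¹ p.1),
    q (x (σ⁻¹ p.2)) (x (σ⁻¹ p.1))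

/-- The full Fock space over `ℂⁿ`, realized as `ℓ²(Λ̃)`. -/
noncomputable abbrev FockSpace (n : ℕ) := lp (fun _ : List (Fin n) => ℂ) 2

/-!
The hypotheses on `Q` make it the orthogonal projection `P` onto `Γ_q`, so
`G_i = P (V_i + V_i^*)` on `Γ_q` is self-adjoint, and `V_i^*` is the annihilation operator
`e_{iγ} ↦ e_γ`. Since `q_ii = 1` the vector `e_{ii}` is `q`-symmetric, whence
`G_i G_i ω = e_{ii} + ω`. For `i ≠ j` the vector `e_{ij} - q_{ij} e_{ji}` is orthogonal to `Γ_q`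
(as `|q_{ij}| = 1`) and `e_{ij} + q_{ij} e_{ji}` lies in it (as `q_{ji} q_{ij} = 1`), so
`G_i G_j ω = P e_{ij} = ½ (e_{ij} + q_{ij} e_{ji})`. Moving the two outer factors across the
inner product, the two moments are `⟪e_{22} + ω, e_{11} + ω⟫ = 1` and
`‖½ (e_{12} + q_{12} e_{21})‖² = 1/2`.
-/

open scoped InnerProductSpace ComplexConjugate
open ContinuousLinearMap

section QSymmetric

variable {n : ℕ} (q : Fin n → Fin n → ℂ)

lemma qSigma_one {m : ℕ} (α : Fin m → Fin n) : qSigma q α 1 = 1 := by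
  refine Finset.prod_eq_one fun p hp => ?_
  simp only [Finset.mem_filter, inv_one, Equiv.Perm.coe_one, id_eq] at hp
  exact absurd hp.2.1 (lt_asymm hp.2.2)

lemma qSigma_swap (α : Fin 2 → Fin n) : qSigma q α (Equiv.swap 0 1) = q (α 0) (α 1) := by
  rw [qSigma, show Finset.univ.filter (fun p : Fin 2 × Fin 2 =>
      p.1 < p.2 ∧ (Equiv.swap 0 1)⁻¹ p.2 < (Equiv.swap 0 1)⁻¹ p.1) = {(0, 1)} by decide]
  simp

def IsQSymmetric (x : List (Fin n) → ℂ) : Prop :=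
  ∀ (m : ℕ) (α : Fin m → Fin n) (σ : Equiv.Perm (Fin m)),
    x (List.ofFn fun i => α (σ⁻¹ i)) = qSigma q α σ * x (List.ofFn α)

variable {q}

lemma IsQSymmetric.apply_pair_swap {x : List (Fin n) → ℂ} (hx : IsQSymmetric q x) (a b : Fin n) :
    x [b, a] = q a b * x [a, b] := by
  simpa [qSigma_swap, List.ofFn_succ] using hx 2 ![a, b] (Equiv.swap 0 1)

lemma isQSymmetric_of_length_eq {x : List (Fin n) → ℂ} {k : ℕ}
    (hx : ∀ β : List (Fin n), β.length ≠ k → x β = 0)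
    (hk : ∀ (α : Fin k → Fin n) (σ : Equiv.Perm (Fin k)),
      x (List.ofFn fun i => α (σ⁻¹ i)) = qSigma q α σ * x (List.ofFn α)) :
    IsQSymmetric q x := by
  intro m α σ
  obtain rfl | hm := eq_or_ne m k
  · exact hk α σ
  · rw [hx _ (by simpa using hm), hx _ (by simpa using hm), mul_zero]

lemma isQSymmetric_of_length_eq_of_le_one {x : List (Fin n) → ℂ} {k : ℕ} (hk : k ≤ 1)
    (hx : ∀ β : List (Fin n), β.length ≠ k → x β = 0) : IsQSymmetric q x :=
  isQSymmetric_of_length_eq hx fun α σ => by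
    have : Subsingleton (Fin k) := Fin.subsingleton_iff_le_one.2 hk
    rw [Subsingleton.elim σ 1, qSigma_one, one_mul]; rfl

lemma isQSymmetric_of_length_eq_two {x : List (Fin n) → ℂ}
    (hx : ∀ β : List (Fin n), β.length ≠ 2 → x β = 0)
    (hpair : ∀ a b, x [b, a] = q a b * x [a, b]) : IsQSymmetric q x :=
  isQSymmetric_of_length_eq hx fun α σ => by
    obtain rfl | rfl : σ = 1 ∨ σ = Equiv.swap 0 1 := by revert σ; decide
    · rw [qSigma_one, one_mul]; rfl
    · simpa [qSigma_swap, List.ofFn_succ] using hpair (α 0) (α 1)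

variable (q)

def qFockSpace : Submodule ℂ (FockSpace n) where
  carrier := {x | IsQSymmetric q x}
  add_mem' hx hy m α σ := by
    rw [lp.coeFn_add, Pi.add_apply, Pi.add_apply, hx m α σ, hy m α σ, mul_add]
  zero_mem' m α σ := by simp
  smul_mem' c x hx m α σ := by
    rw [lp.coeFn_smul, Pi.smul_apply, Pi.smul_apply, hx m α σ, smul_eq_mul, smul_eq_mul,
      mul_left_comm]

variable {q}

lemma single_mem_qFockSpace_of_length_le_one {β : List (Fin n)} (hβ : β.length ≤ 1) :
    lp.single 2 β (1 : ℂ) ∈ qFockSpace q :=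
  isQSymmetric_of_length_eq_of_le_one hβ fun _ hγ =>
    lp.single_apply_ne _ _ _ fun h => hγ (congrArg List.length h)

lemma single_pair_self_mem_qFockSpace {j : Fin n} (hq : q j j = 1) :
    lp.single 2 [j, j] (1 : ℂ) ∈ qFockSpace q := by
  refine isQSymmetric_of_length_eq_two
    (fun γ hγ => lp.single_apply_ne _ _ _ fun h => hγ (congrArg List.length h)) fun a b => ?_
  by_cases h : a = j ∧ b = j
  · obtain ⟨rfl, rfl⟩ := h
    simp [hq]
  · rw [lp.single_apply_ne _ _ _ (by simpa [and_comm] using h),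
      lp.single_apply_ne _ _ _ (by simpa using h), mul_zero]

lemma single_pair_add_mem_qFockSpace {a b : Fin n} (hab : a ≠ b) (hinv : q b a * q a b = 1) :
    lp.single 2 [a, b] (1 : ℂ) + lp.single 2 [b, a] (q a b) ∈ qFockSpace q := by
  refine isQSymmetric_of_length_eq_two (fun γ hγ => ?_) fun c d => ?_
  · rw [lp.coeFn_add, Pi.add_apply, lp.single_apply_ne _ _ _ fun h => hγ (congrArg List.length h),
      lp.single_apply_ne _ _ _ fun h => hγ (congrArg List.length h), add_zero]
  · by_cases h1 : c = a ∧ d = b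
    · obtain ⟨rfl, rfl⟩ := h1
      simp [lp.single_apply, hab, Ne.symm hab]
    by_cases h2 : c = b ∧ d = a
    · obtain ⟨rfl, rfl⟩ := h2
      simp [lp.single_apply, hab, Ne.symm hab, hinv]
    simp only [lp.coeFn_add, Pi.add_apply, lp.single_apply, Pi.single_apply, List.cons.injEq,
      and_true]
    rw [if_neg (by tauto), if_neg (by tauto), if_neg h1, if_neg h2, add_zero, mul_zero]

lemma single_pair_sub_mem_orthogonal {a b : Fin n} (hq : ‖q a b‖ = 1) :
    lp.single 2 [a, b] (1 : ℂ) - lp.single 2 [b, a] (q a b) ∈ (qFockSpace q)ᗮ := by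
  refine (Submodule.mem_orthogonal' _ _).2 fun z hz => ?_
  rw [inner_sub_left, lp.inner_single_left, lp.inner_single_left,
    IsQSymmetric.apply_pair_swap hz a b]
  have hunit : q a b * conj (q a b) = 1 := by simp [Complex.mul_conj', hq]
  simp only [RCLike.inner_apply, map_one]
  linear_combination (-z [a, b]) * hunit

lemma starProjection_single_pair [CompleteSpace (qFockSpace q)] {a b : Fin n} (hab : a ≠ b)
    (hinv : q b a * q a b = 1) (hq : ‖q a b‖ = 1) :
    (qFockSpace q).starProjection (lp.single 2 [a, b] (1 : ℂ))
      = (2⁻¹ : ℂ) • (lp.single 2 [a, b] (1 : ℂ) + lp.single 2 [b, a] (q a b)) :=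
  Submodule.eq_starProjection_of_mem_orthogonal'
    (Submodule.smul_mem _ _ (single_pair_add_mem_qFockSpace hab hinv))
    (Submodule.smul_mem _ (2⁻¹ : ℂ) (single_pair_sub_mem_orthogonal hq)) (by module)

end QSymmetric

section Creation

variable {n : ℕ}

def IsLeftCreation (T : FockSpace n →L[ℂ] FockSpace n) (i : Fin n) : Prop :=
  ∀ α, T (lp.single 2 α (1 : ℂ)) = lp.single 2 (i :: α) (1 : ℂ)

variable {T : FockSpace n →L[ℂ] FockSpace n} {i : Fin n}

lemma adjoint_apply_eq_apply_cons (hT : IsLeftCreation T i) (y : FockSpace n)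
    (α : List (Fin n)) : adjoint T y α = y (i :: α) := by
  simpa [hT α, lp.inner_single_left] using adjoint_inner_right T (lp.single 2 α 1) y

lemma adjoint_single_nil (hT : IsLeftCreation T i) :
    adjoint T (lp.single 2 [] (1 : ℂ)) = 0 :=
  lp.ext <| funext fun α => by simp [adjoint_apply_eq_apply_cons hT, lp.single_apply]

lemma adjoint_single_cons_self (hT : IsLeftCreation T i) (γ : List (Fin n)) :
    adjoint T (lp.single 2 (i :: γ) (1 : ℂ)) = lp.single 2 γ 1 :=
  lp.ext <| funext fun α => by
    simp [adjoint_apply_eq_apply_cons hT, lp.single_apply, Pi.single_apply]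

lemma adjoint_single_cons_of_ne (hT : IsLeftCreation T i) {j : Fin n} (hj : j ≠ i)
    (γ : List (Fin n)) : adjoint T (lp.single 2 (j :: γ) (1 : ℂ)) = 0 :=
  lp.ext <| funext fun α => by simp [adjoint_apply_eq_apply_cons hT, lp.single_apply, Ne.symm hj]

end Creation

section Compression

variable {𝕜 E : Type*} [RCLike 𝕜] [NormedAddCommGroup E] [InnerProductSpace 𝕜 E]
  (K : Submodule 𝕜 E) [CompleteSpace K]

lemma codRestrict_eq_orthogonalProjectionOnto {Q : E →L[𝕜] E} (hQmem : ∀ x, Q x ∈ K)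
    (hQorth : ∀ x, ∀ y ∈ K, ⟪x - Q x, y⟫_𝕜 = 0) :
    Q.codRestrict K hQmem = K.orthogonalProjectionOnto := by
  ext x
  exact (Submodule.eq_starProjection_of_mem_of_inner_eq_zero (hQmem x) (hQorth x)).symm

lemma adjoint_compression [CompleteSpace E] (T : E →L[𝕜] E) :
    adjoint (K.orthogonalProjectionOnto ∘L T ∘L K.subtypeL)
      = K.orthogonalProjectionOnto ∘L adjoint T ∘L K.subtypeL := by
  simp only [adjoint_comp, K.adjoint_subtypeL, K.adjoint_orthogonalProjectionOnto, comp_assoc]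

end Compression

section FieldOperator

variable {n : ℕ} (q : Fin n → Fin n → ℂ) [CompleteSpace (qFockSpace q)]
  (V : Fin n → FockSpace n →L[ℂ] FockSpace n)

noncomputable def qFockSpace.vacuum : qFockSpace q :=
  ⟨lp.single 2 [] 1, single_mem_qFockSpace_of_length_le_one (Nat.zero_le 1)⟩

noncomputable def fieldOperator (i : Fin n) : qFockSpace q →L[ℂ] qFockSpace q :=
  (qFockSpace q).orthogonalProjectionOnto ∘L (V i + adjoint (V i)) ∘L (qFockSpace q).subtypeL

variable {q V}

lemma coe_fieldOperator_apply (i : Fin n) (x : qFockSpace q) :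
    (fieldOperator q V i x : FockSpace n)
      = (qFockSpace q).starProjection (V i x + adjoint (V i) x) :=
  rfl

lemma adjoint_fieldOperator (i : Fin n) : adjoint (fieldOperator q V i) = fieldOperator q V i := by
  rw [fieldOperator, adjoint_compression, map_add, adjoint_adjoint, add_comm]

lemma inner_fieldOperator_left (i : Fin n) (x y : qFockSpace q) :
    ⟪fieldOperator q V i x, y⟫_ℂ = ⟪x, fieldOperator q V i y⟫_ℂ := by
  rw [← adjoint_inner_right, adjoint_fieldOperator]

lemma coe_fieldOperator_vacuum (hV : ∀ i, IsLeftCreation (V i) i) (i : Fin n) :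
    (fieldOperator q V i (qFockSpace.vacuum q) : FockSpace n) = lp.single 2 [i] 1 := by
  rw [coe_fieldOperator_apply, qFockSpace.vacuum, hV, adjoint_single_nil (hV i), add_zero,
    Submodule.starProjection_eq_self_iff.2 (single_mem_qFockSpace_of_length_le_one le_rfl)]

lemma coe_fieldOperator_sq_vacuum (hV : ∀ i, IsLeftCreation (V i) i) {i : Fin n} (hq : q i i = 1) :
    (fieldOperator q V i (fieldOperator q V i (qFockSpace.vacuum q)) : FockSpace n)
      = lp.single 2 [i, i] 1 + lp.single 2 [] 1 := by
  rw [coe_fieldOperator_apply, coe_fieldOperator_vacuum hV, hV, adjoint_single_cons_self (hV i),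
    Submodule.starProjection_eq_self_iff.2
      (add_mem (single_pair_self_mem_qFockSpace hq)
        (single_mem_qFockSpace_of_length_le_one (β := []) (Nat.zero_le 1)))]

lemma coe_fieldOperator_fieldOperator_vacuum_of_ne (hV : ∀ i, IsLeftCreation (V i) i)
    {i j : Fin n} (hij : i ≠ j) (hji : q j i = (q i j)⁻¹) (hq : ‖q i j‖ = 1) :
    (fieldOperator q V i (fieldOperator q V j (qFockSpace.vacuum q)) : FockSpace n)
      = (2⁻¹ : ℂ) • (lp.single 2 [i, j] 1 + lp.single 2 [j, i] (q i j)) := by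
  rw [coe_fieldOperator_apply, coe_fieldOperator_vacuum hV, hV,
    adjoint_single_cons_of_ne (hV i) hij.symm, add_zero, starProjection_single_pair hij ?_ hq]
  rw [hji, inv_mul_cancel₀ (norm_ne_zero_iff.1 (by simp [hq]))]

lemma inner_vacuum_fieldOperator_sq_mul_sq (hV : ∀ i, IsLeftCreation (V i) i)
    {i j : Fin n} (hij : i ≠ j) (hi : q i i = 1) (hj : q j j = 1) :
    ⟪qFockSpace.vacuum q, fieldOperator q V j (fieldOperator q V j
      (fieldOperator q V i (fieldOperator q V i (qFockSpace.vacuum q))))⟫_ℂ = 1 := by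
  rw [← inner_fieldOperator_left, ← inner_fieldOperator_left, Submodule.coe_inner,
    coe_fieldOperator_sq_vacuum hV hj, coe_fieldOperator_sq_vacuum hV hi]
  simp [inner_add_left, lp.inner_single_left, lp.single_apply, hij.symm]

lemma inner_vacuum_fieldOperator_mul_sq_mul (hV : ∀ i, IsLeftCreation (V i) i)
    {i j : Fin n} (hij : i ≠ j) (hji : q j i = (q i j)⁻¹) (hq : ‖q i j‖ = 1) :
    ⟪qFockSpace.vacuum q, fieldOperator q V j (fieldOperator q V i
      (fieldOperator q V i (fieldOperator q V j (qFockSpace.vacuum q))))⟫_ℂ = 1 / 2 := by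
  rw [← inner_fieldOperator_left, ← inner_fieldOperator_left, Submodule.coe_inner,
    coe_fieldOperator_fieldOperator_vacuum_of_ne hV hij hji hq]
  have hnorm : q i j * conj (q i j) = 1 := by simp [Complex.mul_conj', hq]
  rw [inner_smul_left, inner_smul_right, inner_add_left, inner_add_right, inner_add_right]
  simp only [lp.inner_single_left, lp.single_apply, Pi.single_apply, List.cons.injEq, hij,
    hij.symm, RCLike.inner_apply, if_true, if_false, false_and, map_one, mul_one, zero_mul,
    add_zero, zero_add, hnorm]
  norm_num [Complex.conj_ofNat]

end FieldOperator

/-- With `G_i = S_i + S_i^*` on the `q`-commuting Fock space, the vacuum expectation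
satisfies `ε(G₂G₂G₁G₁) = 1` but `ε(G₂G₁G₁G₂) = 1/2`; in particular the vacuum expectation
is not tracial. -/
theorem stmt18 {n : ℕ} (hn : 2 ≤ n) (q : Fin n → Fin n → ℂ)
    (hq1 : ∀ i, q i i = 1) (hq2 : ∀ i j, q j i = (q i j)⁻¹) (hq3 : ∀ i j, ‖q i j‖ = 1)
    (V : Fin n → FockSpace n →L[ℂ] FockSpace n)
    (hV : ∀ (i : Fin n) (α : List (Fin n)),
      V i (lp.single 2 α (1 : ℂ)) = lp.single 2 (i :: α) (1 : ℂ))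
    (Γq : Submodule ℂ (FockSpace n)) [CompleteSpace ↥Γq]
    (hΓ : (Γq : Set (FockSpace n))
      = {x : FockSpace n | ∀ (m : ℕ) (α : Fin m → Fin n) (σ : Equiv.Perm (Fin m)),
          x (List.ofFn fun i => α (σ⁻¹ i)) = qSigma q α σ * x (List.ofFn α)})
    (Q : FockSpace n →L[ℂ] FockSpace n)
    (hQmem : ∀ x, Q x ∈ Γq)
    (hQorth : ∀ x : FockSpace n, ∀ y ∈ Γq, (inner ℂ (x - Q x) y : ℂ) = 0)
    (hω : lp.single 2 ([] : List (Fin n)) (1 : ℂ) ∈ Γq) :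
    letI S : Fin n → ↥Γq →L[ℂ] ↥Γq := fun i =>
      (Q.codRestrict Γq hQmem).comp ((V i).comp Γq.subtypeL)
    letI G : Fin n → ↥Γq →L[ℂ] ↥Γq := fun i => S i + ContinuousLinearMap.adjoint (S i)
    letI ω : ↥Γq := ⟨lp.single 2 ([] : List (Fin n)) (1 : ℂ), hω⟩
    letI i1 : Fin n := ⟨0, by omega⟩
    letI i2 : Fin n := ⟨1, by omega⟩
    (inner ℂ ω ((G i2 * G i2 * G i1 * G i1) ω) : ℂ) = 1 ∧
    (inner ℂ ω ((G i2 * G i1 * G i1 * G i2) ω) : ℂ) = 1 / 2 ∧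
    -- in particular, the vacuum expectation is not tracial:
    (inner ℂ ω ((G i2 * (G i2 * G i1 * G i1)) ω) : ℂ)
      ≠ (inner ℂ ω (((G i2 * G i1 * G i1) * G i2) ω) : ℂ) := by
  have hK : Γq = qFockSpace q := SetLike.ext fun x => Set.ext_iff.mp hΓ x
  subst hK
  have hG : ∀ i, Q.codRestrict _ hQmem ∘L V i ∘L (qFockSpace q).subtypeL
      + adjoint (Q.codRestrict _ hQmem ∘L V i ∘L (qFockSpace q).subtypeL) = fieldOperator q V i :=
    fun i => by
      rw [codRestrict_eq_orthogonalProjectionOnto _ hQmem hQorth, adjoint_compression, ← comp_add,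
        ← add_comp]
      rfl
  have hvac : (⟨lp.single 2 [] 1, hω⟩ : qFockSpace q) = qFockSpace.vacuum q := rfl
  have hi : (⟨0, by omega⟩ : Fin n) ≠ ⟨1, by omega⟩ := Fin.ne_of_val_ne zero_ne_one
  have h1 := inner_vacuum_fieldOperator_sq_mul_sq hV hi (hq1 _) (hq1 _)
  have h2 := inner_vacuum_fieldOperator_mul_sq_mul hV hi (hq2 _ _) (hq3 _ _)
  simp only [mul_apply_eq_comp, hG, hvac]
  refine ⟨h1, h2, ?_⟩
  rw [h1, h2]
  norm_num
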